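/- arXiv:1810.10050 — 4 statements merged into one kernel-verified Lean document; each statement's English description precedes it below -/
import Mathlib

section
/- Let (cₙ) be a sequence in (0,1) such that n² cₙ converges to a finite limit L ≥ 0 as n → ∞. Then liminf_{n→∞} ∏_{k=1}^{n} [k cₙ (1-cₙ)^{k-1} / (1 - (1-cₙ)^k)] > 0. -/
/-!
Each factor lies between `(1 - c)^(k-1)` (Bernoulli's inequality) and `1` (the geometric sum
`1 - (1-c)^k = c ∑_{i<k} (1-c)^i` has `k` terms, each at least `(1-c)^(k-1)`), so the `n`-th
product is at least `(1 - cₙ)^(n²)`. Since `cₙ → 0` and `n² cₙ` stays bounded, eventually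
`(1 - cₙ)^(n²) ≥ exp (-2 n² cₙ) ≥ exp (-2 (L + 1))`.
-/

open Filter Real Finset

/-- Given that a population of `k` individuals, each dying independently with probability `x`,
loses at least one of them, the probability that it loses exactly one. -/
noncomputable def singleDropProb (x : ℝ) (k : ℕ) : ℝ :=
  k * x * (1 - x) ^ (k - 1) / (1 - (1 - x) ^ k)

section singleDropProb

variable {x : ℝ} {k : ℕ}

lemma one_sub_one_sub_pow_pos (hx0 : 0 < x) (hx1 : x < 1) (hk : k ≠ 0) :
    0 < 1 - (1 - x) ^ k :=
  sub_pos.2 (pow_lt_one₀ (by linarith) (by linarith) hk)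

lemma singleDropProb_nonneg (hx0 : 0 < x) (hx1 : x < 1) (hk : k ≠ 0) :
    0 ≤ singleDropProb x k := by
  have : 0 ≤ 1 - x := by linarith
  exact div_nonneg (by positivity) (one_sub_one_sub_pow_pos hx0 hx1 hk).le

lemma one_sub_pow_pred_le_singleDropProb (hx0 : 0 < x) (hx1 : x < 1) (hk : k ≠ 0) :
    (1 - x) ^ (k - 1) ≤ singleDropProb x k := by
  rw [singleDropProb, le_div_iff₀ (one_sub_one_sub_pow_pos hx0 hx1 hk)]
  have bernoulli : 1 - k * x ≤ (1 - x) ^ k := by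
    simpa [sub_eq_add_neg] using one_add_mul_le_pow (a := -x) (by linarith) k
  have : 0 ≤ (1 - x) ^ (k - 1) := pow_nonneg (by linarith) _
  nlinarith

lemma singleDropProb_le_one (hx0 : 0 < x) (hx1 : x < 1) (hk : k ≠ 0) :
    singleDropProb x k ≤ 1 := by
  rw [singleDropProb, div_le_one (one_sub_one_sub_pow_pos hx0 hx1 hk)]
  have geom : 1 - (1 - x) ^ k = x * ∑ i ∈ range k, (1 - x) ^ i := by
    simpa using (mul_neg_geom_sum (1 - x) k).symm
  have terms : (k : ℝ) * (1 - x) ^ (k - 1) ≤ ∑ i ∈ range k, (1 - x) ^ i := by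
    simpa using card_nsmul_le_sum (range k) (fun i => (1 - x) ^ i) ((1 - x) ^ (k - 1))
      fun i hi => pow_le_pow_of_le_one (by linarith) (by linarith)
        (by rw [mem_range] at hi; omega)
  rw [geom]
  linarith [mul_le_mul_of_nonneg_left terms hx0.le]

lemma one_sub_pow_sq_le_prod_singleDropProb (hx0 : 0 < x) (hx1 : x < 1) (n : ℕ) :
    (1 - x) ^ (n ^ 2) ≤ ∏ k ∈ Icc 1 n, singleDropProb x k := by
  calc (1 - x) ^ (n ^ 2) = ∏ _k ∈ Icc 1 n, (1 - x) ^ n := by simp [sq, pow_mul]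
    _ ≤ ∏ k ∈ Icc 1 n, singleDropProb x k := by
      refine prod_le_prod (fun _ _ => pow_nonneg (by linarith) _) fun k hk => ?_
      rw [mem_Icc] at hk
      exact (pow_le_pow_of_le_one (by linarith) (by linarith) (by omega)).trans
        (one_sub_pow_pred_le_singleDropProb hx0 hx1 (by omega))

lemma prod_singleDropProb_le_one (hx0 : 0 < x) (hx1 : x < 1) (n : ℕ) :
    ∏ k ∈ Icc 1 n, singleDropProb x k ≤ 1 := by
  refine prod_le_one (fun k hk => ?_) fun k hk => ?_ <;> rw [mem_Icc] at hk
  · exact singleDropProb_nonneg hx0 hx1 (by omega)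
  · exact singleDropProb_le_one hx0 hx1 (by omega)

end singleDropProb

lemma exp_neg_two_mul_le_one_sub {x : ℝ} (hx0 : 0 ≤ x) (hx : x ≤ 1 / 2) :
    exp (-(2 * x)) ≤ 1 - x := by
  -- `exp (2x) ≥ 1 + 2x` and `(1 - x)(1 + 2x) = 1 + x(1 - 2x) ≥ 1`
  rw [exp_neg, inv_le_iff_one_le_mul₀ (exp_pos _)]
  nlinarith [add_one_le_exp (2 * x)]

theorem stmt_5_general (c : ℕ → ℝ) (hc : ∀ n, c n ∈ Set.Ioo (0 : ℝ) 1)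
    (L : ℝ)
    (hlim : Tendsto (fun n : ℕ => (n : ℝ) ^ 2 * c n) atTop (nhds L)) :
    0 < atTop.liminf
      (fun n : ℕ => ∏ k ∈ Finset.Icc 1 n,
        (k : ℝ) * c n * (1 - c n) ^ (k - 1) / (1 - (1 - c n) ^ k)) := by
  have hc0 : Tendsto c atTop (nhds 0) := by
    refine (hlim.div_atTop (tendsto_pow_atTop two_ne_zero |>.comp
      tendsto_natCast_atTop_atTop)).congr' ?_
    filter_upwards [eventually_ne_atTop 0] with n hn
    simp only [Function.comp_apply]
    field_simp [show (n : ℝ) ≠ 0 by exact_mod_cast hn]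
  have lower : ∀ᶠ n in atTop,
      exp (-(2 * (L + 1))) ≤ ∏ k ∈ Icc 1 n, singleDropProb (c n) k := by
    filter_upwards [hlim.eventually_le_const (lt_add_one L),
      hc0.eventually_le_const one_half_pos] with n hsq hsmall
    obtain ⟨h0, h1⟩ := hc n
    calc exp (-(2 * (L + 1))) ≤ exp (-(2 * c n)) ^ (n ^ 2) := by
          rw [← exp_nat_mul, exp_le_exp]; push_cast; nlinarith
      _ ≤ (1 - c n) ^ (n ^ 2) :=
          pow_le_pow_left₀ (exp_nonneg _) (exp_neg_two_mul_le_one_sub h0.le hsmall) _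
      _ ≤ _ := one_sub_pow_sq_le_prod_singleDropProb h0 h1 n
  have bounded : IsBoundedUnder (· ≤ ·) atTop
      fun n => ∏ k ∈ Icc 1 n, singleDropProb (c n) k :=
    isBoundedUnder_of ⟨1, fun n => prod_singleDropProb_le_one (hc n).1 (hc n).2 n⟩
  exact (exp_pos _).trans_le (le_liminf_of_le bounded.isCoboundedUnder_ge lower)

/-- If `(cₙ)` is a sequence in `(0,1)` with `n² cₙ → L` for some finite `L ≥ 0`,
then `liminf_{n→∞} ∏_{k=1}^{n} k cₙ (1-cₙ)^{k-1} / (1 - (1-cₙ)^k) > 0`. -/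
theorem stmt_5 (c : ℕ → ℝ) (hc : ∀ n, c n ∈ Set.Ioo (0 : ℝ) 1)
    (L : ℝ) (hL : 0 ≤ L)
    (hlim : Tendsto (fun n : ℕ => (n : ℝ) ^ 2 * c n) atTop (nhds L)) :
    0 < atTop.liminf
      (fun n : ℕ => ∏ k ∈ Finset.Icc 1 n,
        (k : ℝ) * c n * (1 - c n) ^ (k - 1) / (1 - (1 - c n) ^ k)) :=
  stmt_5_general c hc L hlim
end

section
/- Let α > 0 and β > 0 with β - α > 2, and for 1 ≤ k ≤ n set c_{k,n} = k^α / n^β (assume n is large enough that c_{k,n} ∈ (0,1) for all 1 ≤ k ≤ n). Then ∏_{k=1}^{n} [k c_{k,n} (1-c_{k,n})^{k-1} / (1 - (1-c_{k,n})^k)] → 1 as n → ∞. In particular, (1 - 1/n^{β-α})^{n(n-1)/2} → 1 as n → ∞. -/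
open Filter Real

private lemma sum_icc_pred (n : ℕ) : ∑ k ∈ Finset.Icc 1 n, (k-1) = n*(n-1)/2 := by
  rw [← Finset.Ico_add_one_right_eq_Icc, Finset.sum_Ico_eq_sum_range]
  simp [Finset.sum_range_id]

private lemma factor_bounds {c : ℝ} (hc0 : 0 < c) (hc1 : c < 1) {k : ℕ} (hk : 1 ≤ k) :
    (1-c)^(k-1) ≤ (k:ℝ)*c*(1-c)^(k-1)/(1-(1-c)^k) ∧
    (k:ℝ)*c*(1-c)^(k-1)/(1-(1-c)^k) ≤ 1 := by
  set q : ℝ := 1 - c with hq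
  have hq0 : 0 < q := by simp only [hq]; linarith
  have hq1 : q < 1 := by simp only [hq]; linarith
  set S : ℝ := ∑ i ∈ Finset.range k, q^i with hSdef
  have hgeom : 1 - q^k = c * S := by
    have h2 : S * (q - 1) = q^k - 1 := geom_sum_mul q k
    have h3 : q - 1 = -c := by rw [hq]; ring
    linear_combination h2 - S * h3
  have hS_le : S ≤ k := by
    calc S ≤ ∑ _i ∈ Finset.range k, (1:ℝ) :=
          Finset.sum_le_sum (fun i _ => pow_le_one₀ hq0.le hq1.le)
    _ = k := by simp
  have hS_ge : (k:ℝ) * q^(k-1) ≤ S := by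
    calc (k:ℝ) * q^(k-1) = ∑ _i ∈ Finset.range k, q^(k-1) := by
          simp [mul_comm]
    _ ≤ S := Finset.sum_le_sum (fun i hi => pow_le_pow_of_le_one hq0.le hq1.le
        (by have := Finset.mem_range.mp hi; omega))
  have hpw : (0:ℝ) < q^(k-1) := pow_pos hq0 _
  have hden : 0 < 1 - q^k := by
    rw [hgeom]
    have : (0:ℝ) < S := lt_of_lt_of_le (by positivity) hS_ge
    positivity
  constructor
  · rw [le_div_iff₀ hden, hgeom]
    nlinarith [mul_le_mul_of_nonneg_left hS_le hc0.le, hpw.le]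
  · rw [div_le_one hden, hgeom]
    nlinarith [mul_le_mul_of_nonneg_left hS_ge hc0.le]

/-- Let `α, β > 0` with `β - α > 2`, and set `c_{k,n} = k^α / n^β` (which lies
in `(0,1)` for all `1 ≤ k ≤ n` once `n` is large enough).  Then
`∏_{k=1}^{n} k c_{k,n} (1-c_{k,n})^{k-1} / (1 - (1-c_{k,n})^k) → 1` as
`n → ∞`; in particular `(1 - 1/n^{β-α})^{n(n-1)/2} → 1`. -/
theorem stmt_8 (α β : ℝ) (hα : 0 < α) (hβ : 0 < β) (hβα : 2 < β - α)
    (c : ℕ → ℕ → ℝ) (hc : ∀ k n : ℕ, c k n = (k : ℝ) ^ α / (n : ℝ) ^ β) :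
    Tendsto
      (fun n : ℕ => ∏ k ∈ Finset.Icc 1 n,
        (k : ℝ) * c k n * (1 - c k n) ^ (k - 1) / (1 - (1 - c k n) ^ k))
      atTop (nhds 1) ∧
    Tendsto
      (fun n : ℕ => (1 - 1 / (n : ℝ) ^ (β - α)) ^ (n * (n - 1) / 2))
      atTop (nhds 1) := by
  -- n^(2-(β-α)) → 0
  have hzero : Tendsto (fun n : ℕ => (n:ℝ)^((2:ℝ) - (β-α))) atTop (nhds 0) := by
    have h := tendsto_rpow_neg_atTop (by linarith : (0:ℝ) < (β-α) - 2)
    have h' := h.comp (tendsto_natCast_atTop_atTop (R := ℝ))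
    refine h'.congr (fun n => ?_)
    simp only [Function.comp_apply]
    congr 1
    ring
  have hone : Tendsto (fun n:ℕ => 1 - (n:ℝ)^((2:ℝ)-(β-α))) atTop (nhds 1) := by
    simpa using (tendsto_const_nhds.sub hzero)
  -- the second limit
  have h2 : Tendsto
      (fun n : ℕ => (1 - 1 / (n : ℝ) ^ (β - α)) ^ (n * (n - 1) / 2))
      atTop (nhds 1) := by
    have hub : ∀ᶠ n:ℕ in atTop,
        (1 - 1/(n:ℝ)^(β-α)) ^ (n*(n-1)/2) ≤ 1 := by
      filter_upwards [eventually_ge_atTop 1] with n hn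
      have hn1 : (1:ℝ) ≤ (n:ℝ) := by exact_mod_cast hn
      have hd1 : 1/(n:ℝ)^(β-α) ≤ 1 := by
        rw [div_le_one (by positivity)]
        exact one_le_rpow hn1 (by linarith)
      have hd0 : (0:ℝ) < 1/(n:ℝ)^(β-α) := by positivity
      exact pow_le_one₀ (by linarith) (by linarith)
    have hlb : ∀ᶠ n:ℕ in atTop,
        1 - (n:ℝ)^((2:ℝ)-(β-α)) ≤ (1 - 1/(n:ℝ)^(β-α)) ^ (n*(n-1)/2) := by
      filter_upwards [eventually_ge_atTop 1] with n hn
      have hn1 : (1:ℝ) ≤ (n:ℝ) := by exact_mod_cast hn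
      have hn0 : (0:ℝ) < (n:ℝ) := by linarith
      set d : ℝ := 1/(n:ℝ)^(β-α) with hd
      have hd1 : d ≤ 1 := by
        rw [hd, div_le_one (by positivity)]
        exact one_le_rpow hn1 (by linarith)
      have hd0 : (0:ℝ) < d := by rw [hd]; positivity
      have hbern : 1 - (↑(n*(n-1)/2):ℝ) * d ≤ (1 - d) ^ (n*(n-1)/2) := by
        have := one_add_mul_le_pow (a := -d) (by linarith) (n*(n-1)/2)
        calc 1 - (↑(n*(n-1)/2):ℝ) * d = 1 + (↑(n*(n-1)/2):ℝ) * (-d) := by ring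
        _ ≤ (1 + (-d)) ^ (n*(n-1)/2) := this
        _ = (1 - d) ^ (n*(n-1)/2) := by ring_nf
      have hmd : (↑(n*(n-1)/2):ℝ) * d ≤ (n:ℝ)^((2:ℝ)-(β-α)) := by
        have hm : (↑(n*(n-1)/2):ℝ) ≤ (n:ℝ)^(2:ℕ) := by
          have : n*(n-1)/2 ≤ n^2 := by
            calc n*(n-1)/2 ≤ n*(n-1) := Nat.div_le_self _ _
            _ ≤ n*n := Nat.mul_le_mul_left _ (Nat.sub_le _ _)
            _ = n^2 := (sq n).symm
          exact_mod_cast this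
        have hdval : d = (n:ℝ)^(-(β-α)) := by
          rw [hd, Real.rpow_neg hn0.le, one_div]
        calc (↑(n*(n-1)/2):ℝ) * d ≤ (n:ℝ)^(2:ℕ) * d :=
              mul_le_mul_of_nonneg_right hm hd0.le
        _ = (n:ℝ)^((2:ℝ)) * (n:ℝ)^(-(β-α)) := by
              rw [hdval, ← Real.rpow_natCast (n:ℝ) 2]; norm_num
        _ = (n:ℝ)^((2:ℝ)-(β-α)) := by
              rw [← Real.rpow_add hn0]; ring_nf
      linarith
    exact tendsto_of_tendsto_of_tendsto_of_le_of_le' hone tendsto_const_nhds hlb hub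
  refine ⟨?_, h2⟩
  -- the first limit, by squeezing between the second and the constant 1
  have key : ∀ᶠ n:ℕ in atTop,
      (1 - 1/(n:ℝ)^(β-α)) ^ (n*(n-1)/2) ≤
        (∏ k ∈ Finset.Icc 1 n,
          (k : ℝ) * c k n * (1 - c k n) ^ (k - 1) / (1 - (1 - c k n) ^ k)) ∧
      (∏ k ∈ Finset.Icc 1 n,
          (k : ℝ) * c k n * (1 - c k n) ^ (k - 1) / (1 - (1 - c k n) ^ k)) ≤ 1 := by
    filter_upwards [eventually_ge_atTop 2] with n hn
    have hn1 : (1:ℝ) < (n:ℝ) := by exact_mod_cast Nat.lt_of_lt_of_le one_lt_two hn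
    have hn0 : (0:ℝ) < (n:ℝ) := by linarith
    set d : ℝ := 1/(n:ℝ)^(β-α) with hd
    have hdval : d = (n:ℝ)^α / (n:ℝ)^β := by
      rw [hd, Real.rpow_sub hn0, one_div_div]
    have hd1 : d < 1 := by
      rw [hdval, div_lt_one (Real.rpow_pos_of_pos hn0 β)]
      exact Real.rpow_lt_rpow_of_exponent_lt hn1 (by linarith)
    have hd0 : (0:ℝ) < d := by rw [hd]; positivity
    -- per-factor facts
    have hfac : ∀ k ∈ Finset.Icc 1 n,
        (1-d)^(k-1) ≤ (k : ℝ) * c k n * (1 - c k n) ^ (k - 1) / (1 - (1 - c k n) ^ k) ∧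
        (k : ℝ) * c k n * (1 - c k n) ^ (k - 1) / (1 - (1 - c k n) ^ k) ≤ 1 := by
      intro k hkmem
      obtain ⟨hk1, hkn⟩ := Finset.mem_Icc.mp hkmem
      have hk0 : (0:ℝ) < (k:ℝ) := by exact_mod_cast hk1
      have hkα : (k:ℝ)^α ≤ (n:ℝ)^α :=
        Real.rpow_le_rpow (by positivity) (by exact_mod_cast hkn) hα.le
      have hcle : c k n ≤ d := by
        rw [hc, hdval]
        exact (div_le_div_iff_of_pos_right (Real.rpow_pos_of_pos hn0 β)).mpr hkα
      have hc0 : 0 < c k n := by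
        rw [hc]
        exact div_pos (Real.rpow_pos_of_pos hk0 α) (Real.rpow_pos_of_pos hn0 β)
      have hc1 : c k n < 1 := lt_of_le_of_lt hcle hd1
      obtain ⟨hl, hu⟩ := factor_bounds hc0 hc1 hk1
      refine ⟨le_trans ?_ hl, hu⟩
      exact pow_le_pow_left₀ (by linarith) (by linarith) _
    constructor
    · calc (1 - d) ^ (n*(n-1)/2)
          = (1 - d) ^ (∑ k ∈ Finset.Icc 1 n, (k-1)) := by rw [sum_icc_pred]
      _ = ∏ k ∈ Finset.Icc 1 n, (1 - d)^(k-1) := by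
            rw [Finset.prod_pow_eq_pow_sum]
      _ ≤ ∏ k ∈ Finset.Icc 1 n,
            (k : ℝ) * c k n * (1 - c k n) ^ (k - 1) / (1 - (1 - c k n) ^ k) :=
            Finset.prod_le_prod
              (fun k _ => pow_nonneg (by linarith) _)
              (fun k hk => (hfac k hk).1)
    · exact Finset.prod_le_one
        (fun k hk => le_trans (pow_nonneg (by linarith) _) (hfac k hk).1)
        (fun k hk => (hfac k hk).2)
  have hlb := key.mono (fun n h => h.1)
  have hub := key.mono (fun n h => h.2)
  exact tendsto_of_tendsto_of_tendsto_of_le_of_le' h2 tendsto_const_nhds hlb hub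
end

section
/- Let α > 0 and β > 0, and let c_{k,n} ∈ (0,1) satisfy lim_{n→∞} c_{k,n} / (k^α/n^β) = 1 for every fixed integer k ≥ 1. Set aₙ = n^β. Then for every fixed k ≥ 1 and every real s with 0 < s < k^{α+1}, lim_{n→∞} k c_{k,n} (1-c_{k,n})^{k-1} / (e^{-s/aₙ} - (1-c_{k,n})^k) = k^{α+1} / (k^{α+1} - s). -/
/-!
Write `aₙ = n^β` and `K = k^α`. The hypothesis says `c_{k,n} aₙ → K`, so in particular
`c_{k,n} → 0`, and also `-s/aₙ → 0` with `(-s/aₙ) aₙ = -s`. Numerator and denominator are,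
up to the common factor `1/aₙ`, of the form `φ(xₙ) aₙ` with `φ(0) = 0` and `xₙ aₙ → L`, and
such a product tends to `φ'(0) L`: the numerator `k x (1-x)^{k-1}` and the part
`1 - (1-x)^k` of the denominator both have derivative `k` at `0`, while `e^x - 1` has
derivative `1`. Hence numerator `· aₙ → kK` and denominator `· aₙ → kK - s`.
-/

open Filter Topology Asymptotics

theorem HasDerivAt.tendsto_comp_mul_of_tendsto_mul {φ : ℝ → ℝ} {d L : ℝ}
    (hφ : HasDerivAt φ d 0) (hφ0 : φ 0 = 0) {ι : Type*} {l : Filter ι} {x a : ι → ℝ}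
    (hx : Tendsto x l (𝓝 0)) (hxa : Tendsto (fun i => x i * a i) l (𝓝 L)) :
    Tendsto (fun i => φ (x i) * a i) l (𝓝 (d * L)) := by
  have hlin : (fun i => φ (x i) - x i * d) =o[l] x := by
    simpa [hφ0, Function.comp_def] using (hasDerivAt_iff_isLittleO.mp hφ).comp_tendsto hx
  have herr : Tendsto (fun i => (φ (x i) - x i * d) * a i) l (𝓝 0) :=
    (isLittleO_one_iff ℝ).mp <|
      ((hlin.mul_isBigO (isBigO_refl a l)).trans_isBigO (hxa.isBigO_one ℝ)).congr_right
        fun _ => rfl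
  simpa [sub_mul, mul_comm d, mul_assoc] using herr.add (hxa.const_mul d)

theorem tendsto_zero_of_tendsto_mul_of_tendsto_atTop {ι : Type*} {l : Filter ι} {x a : ι → ℝ}
    {L : ℝ} (hxa : Tendsto (fun i => x i * a i) l (𝓝 L)) (ha : Tendsto a l atTop) :
    Tendsto x l (𝓝 0) :=
  (hxa.div_atTop ha).congr' <| (ha.eventually_ne_atTop 0).mono fun i hi => by field_simp

theorem tendsto_mul_of_tendsto_div_div_one {ι : Type*} {l : Filter ι} {x a : ι → ℝ} {K : ℝ}
    (hK : K ≠ 0) (ha : ∀ᶠ i in l, a i ≠ 0) (h : Tendsto (fun i => x i / (K / a i)) l (𝓝 1)) :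
    Tendsto (fun i => x i * a i) l (𝓝 K) := by
  simpa using (h.mul_const K).congr' <| ha.mono fun i hi => by field_simp

theorem hasDerivAt_one_sub_one_sub_pow (k : ℕ) :
    HasDerivAt (fun x : ℝ => 1 - (1 - x) ^ k) k 0 := by
  simpa using (((hasDerivAt_id (0 : ℝ)).const_sub 1).pow k).const_sub 1

theorem hasDerivAt_mul_one_sub_pow (k : ℕ) :
    HasDerivAt (fun x : ℝ => k * x * (1 - x) ^ (k - 1)) k 0 := by
  simpa using ((hasDerivAt_id' (0 : ℝ)).const_mul (k : ℝ)).fun_mul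
    (((hasDerivAt_id' (0 : ℝ)).const_sub 1).fun_pow (k - 1))

theorem hasDerivAt_exp_sub_one : HasDerivAt (fun x : ℝ => Real.exp x - 1) 1 0 := by
  simpa using (Real.hasDerivAt_exp 0).sub_const 1

theorem stmt_14_general (α β : ℝ) (hβ : 0 < β)
    (c : ℕ → ℕ → ℝ)
    (hlim : ∀ k : ℕ, 1 ≤ k →
      Tendsto (fun n : ℕ => c k n / ((k : ℝ) ^ α / (n : ℝ) ^ β)) atTop (nhds 1))
    (k : ℕ) (hk : 1 ≤ k) (s : ℝ) (hsk : s < (k : ℝ) ^ (α + 1)) :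
    Tendsto
      (fun n : ℕ => (k : ℝ) * c k n * (1 - c k n) ^ (k - 1) /
        (Real.exp (-s / (n : ℝ) ^ β) - (1 - c k n) ^ k))
      atTop (nhds ((k : ℝ) ^ (α + 1) / ((k : ℝ) ^ (α + 1) - s))) := by
  have hk0 : (0 : ℝ) < k := by exact_mod_cast hk
  have hk_rpow : (k : ℝ) ^ (α + 1) = k * k ^ α := by
    rw [Real.rpow_add_one hk0.ne', mul_comm]
  have ha : Tendsto (fun n : ℕ => (n : ℝ) ^ β) atTop atTop :=
    (tendsto_rpow_atTop hβ).comp tendsto_natCast_atTop_atTop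
  have ha0 : ∀ᶠ n : ℕ in atTop, (n : ℝ) ^ β ≠ 0 := ha.eventually_ne_atTop 0
  have hca : Tendsto (fun n => c k n * (n : ℝ) ^ β) atTop (𝓝 ((k : ℝ) ^ α)) :=
    tendsto_mul_of_tendsto_div_div_one (Real.rpow_pos_of_pos hk0 α).ne' ha0 (hlim k hk)
  have hc0 := tendsto_zero_of_tendsto_mul_of_tendsto_atTop hca ha
  have hsa : Tendsto (fun n : ℕ => -s / (n : ℝ) ^ β * (n : ℝ) ^ β) atTop (𝓝 (-s)) :=
    tendsto_const_nhds.congr' <| ha0.mono fun n hn => by field_simp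
  have hnum := (hasDerivAt_mul_one_sub_pow k).tendsto_comp_mul_of_tendsto_mul (by simp) hc0 hca
  have hexp := hasDerivAt_exp_sub_one.tendsto_comp_mul_of_tendsto_mul (by simp)
    (tendsto_const_nhds.div_atTop ha) hsa
  have hone_sub_pow :=
    (hasDerivAt_one_sub_one_sub_pow k).tendsto_comp_mul_of_tendsto_mul (by simp) hc0 hca
  have hden : Tendsto (fun n : ℕ => (Real.exp (-s / (n : ℝ) ^ β) - (1 - c k n) ^ k) * (n : ℝ) ^ β)
      atTop (𝓝 (k * k ^ α - s)) := by
    convert hexp.add hone_sub_pow using 1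
    · ext n
      ring
    · congr 1
      ring
  rw [hk_rpow] at hsk ⊢
  refine (hnum.div hden (sub_ne_zero.mpr hsk.ne')).congr' ?_
  filter_upwards [ha0] with n hn
  exact mul_div_mul_right _ _ hn

/-- Let `α, β > 0` and let `c_{k,n} ∈ (0,1)` satisfy
`c_{k,n} / (k^α/n^β) → 1` as `n → ∞` for every fixed `k ≥ 1`.  With
`aₙ = n^β`, for every fixed `k ≥ 1` and every `s` with `0 < s < k^{α+1}`,
`k c_{k,n} (1-c_{k,n})^{k-1} / (e^{-s/aₙ} - (1-c_{k,n})^k) →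
  k^{α+1} / (k^{α+1} - s)`. -/
theorem stmt_14 (α β : ℝ) (hα : 0 < α) (hβ : 0 < β)
    (c : ℕ → ℕ → ℝ) (hc : ∀ k n : ℕ, c k n ∈ Set.Ioo (0 : ℝ) 1)
    (hlim : ∀ k : ℕ, 1 ≤ k →
      Tendsto (fun n : ℕ => c k n / ((k : ℝ) ^ α / (n : ℝ) ^ β)) atTop (nhds 1))
    (k : ℕ) (hk : 1 ≤ k) (s : ℝ) (hs : 0 < s) (hsk : s < (k : ℝ) ^ (α + 1)) :
    Tendsto
      (fun n : ℕ => (k : ℝ) * c k n * (1 - c k n) ^ (k - 1) /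
        (Real.exp (-s / (n : ℝ) ^ β) - (1 - c k n) ^ k))
      atTop (nhds ((k : ℝ) ^ (α + 1) / ((k : ℝ) ^ (α + 1) - s))) :=
  stmt_14_general α β hβ c hlim k hk s hsk
end

section
/- Let α > 0 and β > 0, and let c_{k,n} ∈ (0,1) satisfy lim_{n→∞} c_{k,n}/(k^α/n^β) = 1 for every fixed integer k ≥ 1. Then for every fixed k ≥ 1 and every real t > 0, lim_{n→∞} ∑_{j=1}^{⌊t n^β⌋} ((1-c_{k,n})^k)^{j-1} k (1-c_{k,n})^{k-1} c_{k,n} = 1 - e^{-k^{α+1} t}. -/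
/-!
With `q = (1 - c)^k` and `M = ⌊t n^β⌋`, the sum is a truncated geometric series equal to
`k (1 - c)^(k-1) c / (1 - q) * (1 - q^M)`. The first factor tends to `1` because
`(1 - (1 - x)^k) / x → k` as `x → 0` (a derivative at `0`), and `q^M = (1 - c)^(k M) → exp(-k · k^α t)`
because `c M → k^α t` when `c ~ k^α / n^β`.
-/

open Filter Topology Finset Asymptotics

theorem sum_Icc_one_pow_pred_mul {K : Type*} [Field K] {q : K} (hq : q ≠ 1) (p : K) (M : ℕ) :
    ∑ j ∈ Icc 1 M, q ^ (j - 1) * p = p / (1 - q) * (1 - q ^ M) := by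
  rw [← sum_mul, ← Ico_add_one_right_eq_Icc, sum_Ico_eq_sum_range]
  simp only [add_tsub_cancel_left, add_tsub_cancel_right, geom_sum_eq hq]
  field_simp [sub_ne_zero.mpr hq, sub_ne_zero.mpr hq.symm]
  ring

section OneSubPow

variable {𝕜 ι : Type*} [NontriviallyNormedField 𝕜] {l : Filter ι} {x : ι → 𝕜}

theorem tendsto_one_sub_one_sub_pow_div (hx : Tendsto x l (𝓝[≠] 0)) (k : ℕ) :
    Tendsto (fun i => (1 - (1 - x i) ^ k) / x i) l (𝓝 k) := by
  have hd : HasDerivAt (fun y : 𝕜 => 1 - (1 - y) ^ k) k 0 := by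
    simpa using (((hasDerivAt_id (0 : 𝕜)).const_sub 1).pow k).const_sub 1
  refine ((hasDerivAt_iff_tendsto_slope.mp hd).comp hx).congr fun i => ?_
  simp [slope_def_field]

theorem tendsto_mul_one_sub_pow_pred_mul_div [CharZero 𝕜] (hx : Tendsto x l (𝓝[≠] 0)) {k : ℕ}
    (hk : k ≠ 0) :
    Tendsto (fun i => k * (1 - x i) ^ (k - 1) * x i / (1 - (1 - x i) ^ k)) l (𝓝 1) := by
  have hk' : (k : 𝕜) ≠ 0 := Nat.cast_ne_zero.mpr hk
  have hnum : Tendsto (fun i => (k : 𝕜) * (1 - x i) ^ (k - 1)) l (𝓝 k) := by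
    simpa using (tendsto_const_nhds (x := (k : 𝕜))).mul
      (((tendsto_const_nhds (x := (1 : 𝕜))).sub (tendsto_nhds_of_tendsto_nhdsWithin hx)).pow
        (k - 1))
  refine (div_self hk' ▸ hnum.div (tendsto_one_sub_one_sub_pow_div hx k) hk').congr fun i => ?_
  exact div_div_eq_mul_div _ _ _

end OneSubPow

theorem Real.tendsto_one_add_pow_exp_of_tendsto_mul {ι : Type*} {l : Filter ι} {a : ι → ℝ}
    {m : ι → ℕ} {L : ℝ} (ha : Tendsto a l (𝓝 0)) (ham : Tendsto (fun i => m i * a i) l (𝓝 L)) :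
    Tendsto (fun i => (1 + a i) ^ m i) l (𝓝 (exp L)) := by
  have hlog : (fun y => log (1 + y) - y) =o[𝓝 0] fun y => y := by
    have hd : HasDerivAt (fun y => log (1 + y)) 1 0 := by
      simpa using ((hasDerivAt_id (0 : ℝ)).const_add 1).log (by norm_num)
    simpa using hd.isLittleO
  have herr : (fun i => m i * log (1 + a i) - m i * a i) =o[l] fun _ => (1 : ℝ) := by
    refine (((isBigO_refl (fun i => (m i : ℝ)) l).mul_isLittleO
      (hlog.comp_tendsto ha)).congr_left fun i => ?_).trans_isBigO (ham.isBigO_one ℝ)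
    simp [mul_sub]
  have hmlog : Tendsto (fun i => m i * log (1 + a i)) l (𝓝 L) := by
    simpa using (isLittleO_one_iff ℝ).mp herr |>.add ham
  refine ((continuous_exp.tendsto L).comp hmlog).congr' ?_
  filter_upwards [ha.eventually_const_lt (show (-1 : ℝ) < 0 by norm_num)] with i hi
  rw [Function.comp_apply, exp_nat_mul, exp_log (by linarith)]

theorem eventually_ne_zero_and_ne_zero_of_tendsto_div {ι K : Type*} [Field K] [TopologicalSpace K]
    [T1Space K] {l : Filter ι} {f g : ι → K} {a : K} (h : Tendsto (fun i => f i / g i) l (𝓝 a))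
    (ha : a ≠ 0) : ∀ᶠ i in l, f i ≠ 0 ∧ g i ≠ 0 := by
  filter_upwards [h.eventually_ne ha] with i hi
  exact div_ne_zero_iff.mp hi

section RpowAsymptotics

variable {x : ℕ → ℝ} {b β : ℝ}

theorem tendsto_natCast_rpow_atTop (hβ : 0 < β) :
    Tendsto (fun n : ℕ => (n : ℝ) ^ β) atTop atTop :=
  (tendsto_rpow_atTop hβ).comp tendsto_natCast_atTop_atTop

theorem tendsto_nhdsNE_zero_of_tendsto_div_rpow (hβ : 0 < β)
    (h : Tendsto (fun n : ℕ => x n / (b / (n : ℝ) ^ β)) atTop (𝓝 1)) :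
    Tendsto x atTop (𝓝[≠] 0) := by
  have hne := eventually_ne_zero_and_ne_zero_of_tendsto_div h one_ne_zero
  refine tendsto_nhdsWithin_iff.mpr ⟨?_, hne.mono fun n hn => hn.1⟩
  have hb : Tendsto (fun n : ℕ => b / (n : ℝ) ^ β) atTop (𝓝 0) :=
    tendsto_const_nhds.div_atTop (tendsto_natCast_rpow_atTop hβ)
  refine (mul_zero (1 : ℝ) ▸ h.mul hb).congr' ?_
  filter_upwards [hne] with n hn
  exact div_mul_cancel₀ _ hn.2

theorem tendsto_natFloor_mul_of_tendsto_div_rpow (hβ : 0 < β) {t : ℝ} (ht : 0 ≤ t)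
    (h : Tendsto (fun n : ℕ => x n / (b / (n : ℝ) ^ β)) atTop (𝓝 1)) :
    Tendsto (fun n : ℕ => (⌊t * (n : ℝ) ^ β⌋₊ : ℝ) * x n) atTop (𝓝 (t * b)) := by
  have hfloor := (tendsto_nat_floor_mul_div_atTop ht).comp (tendsto_natCast_rpow_atTop hβ)
  refine (mul_one (t * b) ▸ (hfloor.mul_const b).mul h).congr' ?_
  filter_upwards [eventually_ne_zero_and_ne_zero_of_tendsto_div h one_ne_zero] with n hn
  obtain ⟨hb, hnβ⟩ := div_ne_zero_iff.mp hn.2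
  simp only [Function.comp_apply]
  field_simp

end RpowAsymptotics

theorem stmt_15_general (α β : ℝ) (hβ : 0 < β)
    (c : ℕ → ℕ → ℝ)
    (hlim : ∀ k : ℕ, 1 ≤ k →
      Tendsto (fun n : ℕ => c k n / ((k : ℝ) ^ α / (n : ℝ) ^ β)) atTop (nhds 1))
    (k : ℕ) (hk : 1 ≤ k) (t : ℝ) (ht : 0 < t) :
    Tendsto
      (fun n : ℕ => ∑ j ∈ Finset.Icc 1 ⌊t * (n : ℝ) ^ β⌋₊,
        ((1 - c k n) ^ k) ^ (j - 1) * ((k : ℝ) * (1 - c k n) ^ (k - 1) * c k n))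
      atTop (nhds (1 - Real.exp (-((k : ℝ) ^ (α + 1) * t)))) := by
  have hk0 : k ≠ 0 := Nat.one_le_iff_ne_zero.mp hk
  have hc := tendsto_nhdsNE_zero_of_tendsto_div_rpow hβ (hlim k hk)
  have hexp : Tendsto (fun n : ℕ => ((1 - c k n) ^ k) ^ ⌊t * (n : ℝ) ^ β⌋₊) atTop
      (𝓝 (Real.exp (-((k : ℝ) ^ (α + 1) * t)))) := by
    have hL : -((k : ℝ) ^ (α + 1) * t) = k * (t * (k : ℝ) ^ α) * -1 := by
      rw [Real.rpow_add_one (Nat.cast_ne_zero.mpr hk0)]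
      ring
    have hneg : Tendsto (fun n => -c k n) atTop (𝓝 0) := by
      simpa using (tendsto_nhds_of_tendsto_nhdsWithin hc).neg
    have hcM := ((tendsto_natFloor_mul_of_tendsto_div_rpow hβ ht.le (hlim k hk)).const_mul
      (k : ℝ)).mul_const (-1)
    rw [hL]
    refine (Real.tendsto_one_add_pow_exp_of_tendsto_mul (m := fun n : ℕ => k * ⌊t * (n : ℝ) ^ β⌋₊)
      hneg (hcM.congr fun n => ?_)).congr fun n => ?_
    · push_cast
      ring
    · rw [pow_mul, sub_eq_add_neg]
  have hq : ∀ᶠ n in atTop, (1 - c k n) ^ k ≠ 1 := by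
    filter_upwards [eventually_ne_zero_and_ne_zero_of_tendsto_div
      (tendsto_one_sub_one_sub_pow_div hc k) (Nat.cast_ne_zero.mpr hk0)] with n hn
    exact (sub_ne_zero.mp hn.1).symm
  refine (one_mul (_ : ℝ) ▸ (tendsto_mul_one_sub_pow_pred_mul_div hc hk0).mul
    (tendsto_const_nhds.sub hexp)).congr' ?_
  filter_upwards [hq] with n hn
  exact (sum_Icc_one_pow_pred_mul hn _ _).symm

/-- Let `α, β > 0` and let `c_{k,n} ∈ (0,1)` satisfy
`c_{k,n} / (k^α/n^β) → 1` as `n → ∞` for every fixed `k ≥ 1`.  Then for every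
fixed `k ≥ 1` and every `t > 0`,
`∑_{j=1}^{⌊t n^β⌋} ((1-c_{k,n})^k)^{j-1} k (1-c_{k,n})^{k-1} c_{k,n}
  → 1 - e^{-k^{α+1} t}`. -/
theorem stmt_15 (α β : ℝ) (hα : 0 < α) (hβ : 0 < β)
    (c : ℕ → ℕ → ℝ) (hc : ∀ k n : ℕ, c k n ∈ Set.Ioo (0 : ℝ) 1)
    (hlim : ∀ k : ℕ, 1 ≤ k →
      Tendsto (fun n : ℕ => c k n / ((k : ℝ) ^ α / (n : ℝ) ^ β)) atTop (nhds 1))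
    (k : ℕ) (hk : 1 ≤ k) (t : ℝ) (ht : 0 < t) :
    Tendsto
      (fun n : ℕ => ∑ j ∈ Finset.Icc 1 ⌊t * (n : ℝ) ^ β⌋₊,
        ((1 - c k n) ^ k) ^ (j - 1) * ((k : ℝ) * (1 - c k n) ^ (k - 1) * c k n))
      atTop (nhds (1 - Real.exp (-((k : ℝ) ^ (α + 1) * t)))) :=
  stmt_15_general α β hβ c hlim k hk t ht
end
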